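/- Assume that for every μ₀ ∈ Δ_X there exists an MFG Nash equilibrium consistent with μ₀, and that any two MFG Nash equilibria consistent with the same μ₀ have the same mean-field flow. For each μ ∈ Δ_X choose an MFG-NE (𝛑̂^μ, 𝛍̂^μ) consistent with μ, and define the population-dependent policy π̃(x,μ) := π̂^μ₀(x) (the time-0 stationary policy of the chosen equilibrium starting from μ). Then for every μ₀ ∈ Δ_X, the MF flow induced by π̃ from μ₀ coincides with the equilibrium flow: 𝛍^{μ₀,π̃}_n = 𝛍̂^{μ₀}_n for all n ≥ 0. -/

import Mathlib

open scoped BigOperators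

section MFGDefs

variable {X A : Type*} [Fintype X] [Fintype A]

/-- One-step population update `φ(μ, π)`:
`φ(μ,π)(x) = ∑_{x'} μ(x') ∑_a π(a|x') p(x|x',a,μ)`. -/
def popStep (p : X → A → (X → ℝ) → X → ℝ) (μ : X → ℝ) (π : X → A → ℝ) : X → ℝ :=
  fun x => ∑ x' : X, μ x' * ∑ a : A, π x' a * p x' a μ x

/-- MF flow `Φ(μ₀, 𝛑)` induced by a (population-agnostic) policy from an initial MF state. -/
def mfFlow (p : X → A → (X → ℝ) → X → ℝ) (μ₀ : X → ℝ) (πs : ℕ → X → A → ℝ) : ℕ → X → ℝ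
  | 0 => μ₀
  | n + 1 => popStep p (mfFlow p μ₀ πs n) (πs n)

/-- The agent's state marginals `ν`. -/
def marginals (p : X → A → (X → ℝ) → X → ℝ) (μ₀ : X → ℝ) (πs : ℕ → X → A → ℝ)
    (μs : ℕ → X → ℝ) : ℕ → X → ℝ
  | 0 => μ₀
  | n + 1 => fun x =>
      ∑ x' : X, marginals p μ₀ πs μs n x' * ∑ a : A, πs n x' a * p x' a (μs n) x

/-- Discounted total reward `J(μ₀, 𝛑; 𝛍)`. -/
noncomputable def totalReward (p : X → A → (X → ℝ) → X → ℝ) (r : X → A → (X → ℝ) → ℝ)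
    (γ : ℝ) (μ₀ : X → ℝ) (πs : ℕ → X → A → ℝ) (μs : ℕ → X → ℝ) : ℝ :=
  ∑' n : ℕ, γ ^ n * ∑ x : X, marginals p μ₀ πs μs n x * ∑ a : A, πs n x a * r x a (μs n)

/-- A population-agnostic policy: a sequence of stationary simplex-valued policies. -/
def IsPolicy (πs : ℕ → X → A → ℝ) : Prop := ∀ n x, πs n x ∈ stdSimplex ℝ A

/-- MFG Nash equilibrium consistent with `μ₀`: the flow is the one induced by the policy,
and the policy attains the best possible total reward against this flow. -/
def IsMFGNash (p : X → A → (X → ℝ) → X → ℝ) (r : X → A → (X → ℝ) → ℝ)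
    (γ : ℝ) (μ₀ : X → ℝ) (πs : ℕ → X → A → ℝ) (μs : ℕ → X → ℝ) : Prop :=
  IsPolicy πs ∧ μs = mfFlow p μ₀ πs ∧
    ∀ πs' : ℕ → X → A → ℝ, IsPolicy πs' →
      totalReward p r γ μ₀ πs' μs ≤ totalReward p r γ μ₀ πs μs

end MFGDefs

section MasterDefs

variable {X A : Type*} [Fintype X] [Fintype A]

/-- MF flow induced by a population-dependent policy `π̃ : X × Δ_X → Δ_A` from `μ₀`. -/
def indFlow (p : X → A → (X → ℝ) → X → ℝ) (πt : X → (X → ℝ) → A → ℝ) (μ₀ : X → ℝ) :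
    ℕ → X → ℝ
  | 0 => μ₀
  | n + 1 => popStep p (indFlow p πt μ₀ n) (fun x => πt x (indFlow p πt μ₀ n))

end MasterDefs

section Helpers
variable {X A : Type*} [Fintype X] [Fintype A]

lemma popStep_mem (p : X → A → (X → ℝ) → X → ℝ)
    (hp : ∀ x a μ, μ ∈ stdSimplex ℝ X → p x a μ ∈ stdSimplex ℝ X)
    {μ : X → ℝ} (hμ : μ ∈ stdSimplex ℝ X) {π : X → A → ℝ}
    (hπ : ∀ x, π x ∈ stdSimplex ℝ A) : popStep p μ π ∈ stdSimplex ℝ X := by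
  constructor
  · intro x
    apply Finset.sum_nonneg; intro x' _
    refine mul_nonneg (hμ.1 x') (Finset.sum_nonneg fun a _ =>
      mul_nonneg ((hπ x').1 a) ((hp x' a μ hμ).1 x))
  · show (∑ x : X, ∑ x' : X, μ x' * ∑ a : A, π x' a * p x' a μ x) = 1
    rw [Finset.sum_comm]
    have key : ∀ x' : X, (∑ x : X, μ x' * ∑ a : A, π x' a * p x' a μ x) = μ x' := by
      intro x'
      rw [← Finset.mul_sum, Finset.sum_comm]
      have : (∑ a : A, ∑ x : X, π x' a * p x' a μ x) = 1 := by
        have : ∀ a : A, (∑ x : X, π x' a * p x' a μ x) = π x' a := by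
          intro a; rw [← Finset.mul_sum, (hp x' a μ hμ).2, mul_one]
        simp_rw [this]; exact (hπ x').2
      rw [this, mul_one]
    simp_rw [key]; exact hμ.2

lemma mfFlow_mem (p : X → A → (X → ℝ) → X → ℝ)
    (hp : ∀ x a μ, μ ∈ stdSimplex ℝ X → p x a μ ∈ stdSimplex ℝ X)
    {μ₀ : X → ℝ} (hμ₀ : μ₀ ∈ stdSimplex ℝ X) {πs : ℕ → X → A → ℝ}
    (hπ : IsPolicy πs) : ∀ n, mfFlow p μ₀ πs n ∈ stdSimplex ℝ X := by
  intro n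
  induction n with
  | zero => exact hμ₀
  | succ n ih => exact popStep_mem p hp ih (hπ n)

/-- When `μs` is the flow induced by `πs`, the marginals coincide with the flow. -/
lemma marginals_eq_mfFlow (p : X → A → (X → ℝ) → X → ℝ) (μ₀ : X → ℝ)
    (πs : ℕ → X → A → ℝ) :
    ∀ n, marginals p μ₀ πs (mfFlow p μ₀ πs) n = mfFlow p μ₀ πs n := by
  intro n
  induction n with
  | zero => rfl
  | succ n ih =>
      show (fun x => ∑ x' : X, marginals p μ₀ πs (mfFlow p μ₀ πs) n x' *
        ∑ a : A, πs n x' a * p x' a (mfFlow p μ₀ πs n) x) = _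
      rw [ih]; rfl

lemma marginals_mem (p : X → A → (X → ℝ) → X → ℝ)
    (hp : ∀ x a μ, μ ∈ stdSimplex ℝ X → p x a μ ∈ stdSimplex ℝ X)
    {μ₀ : X → ℝ} (hμ₀ : μ₀ ∈ stdSimplex ℝ X) {πs : ℕ → X → A → ℝ}
    (hπ : IsPolicy πs) {μs : ℕ → X → ℝ} (hμs : ∀ n, μs n ∈ stdSimplex ℝ X) :
    ∀ n, marginals p μ₀ πs μs n ∈ stdSimplex ℝ X := by
  intro n
  induction n with
  | zero => exact hμ₀
  | succ n ih =>
      have : marginals p μ₀ πs μs (n+1) =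
          popStep (fun x a _ => p x a (μs n)) (marginals p μ₀ πs μs n) (πs n) := rfl
      rw [this]
      exact popStep_mem _ (fun x a μ _ => hp x a (μs n) (hμs n)) ih (hπ n)

lemma marginals_shift (p : X → A → (X → ℝ) → X → ℝ) (μ₀ : X → ℝ)
    (πs : ℕ → X → A → ℝ) (μs : ℕ → X → ℝ) :
    ∀ n, marginals p (marginals p μ₀ πs μs 1) (fun k => πs (k+1)) (fun k => μs (k+1)) n
      = marginals p μ₀ πs μs (n+1) := by
  intro n
  induction n with
  | zero => rfl
  | succ n ih =>
      show (fun x => ∑ x' : X, marginals p (marginals p μ₀ πs μs 1)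
          (fun k => πs (k+1)) (fun k => μs (k+1)) n x' *
          ∑ a : A, πs (n+1) x' a * p x' a (μs (n+1)) x) = _
      rw [ih]; rfl

lemma inner_bound {C : ℝ} (r : X → A → (X → ℝ) → ℝ)
    (hr : ∀ x a μ, μ ∈ stdSimplex ℝ X → |r x a μ| ≤ C)
    {ν μ : X → ℝ} (hν : ν ∈ stdSimplex ℝ X) (hμ : μ ∈ stdSimplex ℝ X)
    {π : X → A → ℝ} (hπ : ∀ x, π x ∈ stdSimplex ℝ A) :
    |∑ x : X, ν x * ∑ a : A, π x a * r x a μ| ≤ C := by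
  calc |∑ x : X, ν x * ∑ a : A, π x a * r x a μ|
      ≤ ∑ x : X, |ν x * ∑ a : A, π x a * r x a μ| := Finset.abs_sum_le_sum_abs _ _
    _ ≤ ∑ x : X, ν x * C := by
        apply Finset.sum_le_sum; intro x _
        rw [abs_mul, abs_of_nonneg (hν.1 x)]
        apply mul_le_mul_of_nonneg_left _ (hν.1 x)
        calc |∑ a : A, π x a * r x a μ| ≤ ∑ a : A, |π x a * r x a μ| :=
              Finset.abs_sum_le_sum_abs _ _
          _ ≤ ∑ a : A, π x a * C := by
              apply Finset.sum_le_sum; intro a _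
              rw [abs_mul, abs_of_nonneg ((hπ x).1 a)]
              exact mul_le_mul_of_nonneg_left (hr x a μ hμ) ((hπ x).1 a)
          _ = C := by rw [← Finset.sum_mul, (hπ x).2, one_mul]
    _ = C := by rw [← Finset.sum_mul, hν.2, one_mul]

lemma reward_summable (p : X → A → (X → ℝ) → X → ℝ) (r : X → A → (X → ℝ) → ℝ)
    {γ C : ℝ} (hγ : γ ∈ Set.Ioo (0:ℝ) 1)
    (hp : ∀ x a μ, μ ∈ stdSimplex ℝ X → p x a μ ∈ stdSimplex ℝ X)
    (hr : ∀ x a μ, μ ∈ stdSimplex ℝ X → |r x a μ| ≤ C)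
    {μ₀ : X → ℝ} (hμ₀ : μ₀ ∈ stdSimplex ℝ X) {πs : ℕ → X → A → ℝ} (hπ : IsPolicy πs)
    {μs : ℕ → X → ℝ} (hμs : ∀ n, μs n ∈ stdSimplex ℝ X) :
    Summable (fun n : ℕ => γ ^ n * ∑ x : X, marginals p μ₀ πs μs n x *
      ∑ a : A, πs n x a * r x a (μs n)) := by
  rw [← summable_abs_iff]
  apply Summable.of_nonneg_of_le (fun n => abs_nonneg _)
    (fun n => ?_) (Summable.mul_right C (summable_geometric_of_lt_one (le_of_lt hγ.1) hγ.2))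
  rw [abs_mul, abs_pow, abs_of_pos hγ.1]
  exact mul_le_mul_of_nonneg_left
    (inner_bound r hr (marginals_mem p hp hμ₀ hπ hμs n) (hμs n) (hπ n))
    (pow_nonneg (le_of_lt hγ.1) n)

lemma reward_decomp (p : X → A → (X → ℝ) → X → ℝ) (r : X → A → (X → ℝ) → ℝ)
    {γ C : ℝ} (hγ : γ ∈ Set.Ioo (0:ℝ) 1)
    (hp : ∀ x a μ, μ ∈ stdSimplex ℝ X → p x a μ ∈ stdSimplex ℝ X)
    (hr : ∀ x a μ, μ ∈ stdSimplex ℝ X → |r x a μ| ≤ C)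
    {μ₀ : X → ℝ} (hμ₀ : μ₀ ∈ stdSimplex ℝ X) {πs : ℕ → X → A → ℝ} (hπ : IsPolicy πs)
    {μs : ℕ → X → ℝ} (hμs : ∀ n, μs n ∈ stdSimplex ℝ X) :
    totalReward p r γ μ₀ πs μs
      = (∑ x : X, μ₀ x * ∑ a : A, πs 0 x a * r x a (μs 0))
        + γ * totalReward p r γ (marginals p μ₀ πs μs 1)
            (fun k => πs (k+1)) (fun k => μs (k+1)) := by
  have hsum := reward_summable p r hγ hp hr hμ₀ hπ hμs
  unfold totalReward
  rw [Summable.tsum_eq_zero_add hsum]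
  simp only [pow_zero, one_mul]
  congr 1
  rw [← tsum_mul_left]
  apply tsum_congr; intro n
  rw [marginals_shift p μ₀ πs μs n]
  ring


lemma tail_nash (p : X → A → (X → ℝ) → X → ℝ) (r : X → A → (X → ℝ) → ℝ)
    {γ C : ℝ} (hγ : γ ∈ Set.Ioo (0:ℝ) 1)
    (hp : ∀ x a μ, μ ∈ stdSimplex ℝ X → p x a μ ∈ stdSimplex ℝ X)
    (hr : ∀ x a μ, μ ∈ stdSimplex ℝ X → |r x a μ| ≤ C)
    {μ₀ : X → ℝ} {πs : ℕ → X → A → ℝ} {μs : ℕ → X → ℝ}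
    (hμ₀ : μ₀ ∈ stdSimplex ℝ X) (h : IsMFGNash p r γ μ₀ πs μs) :
    IsMFGNash p r γ (μs 1) (fun n => πs (n+1)) (fun n => μs (n+1)) := by
  obtain ⟨hπ, hflow, hopt⟩ := h
  have hμs : ∀ n, μs n ∈ stdSimplex ℝ X := by
    intro n; rw [hflow]; exact mfFlow_mem p hp hμ₀ hπ n
  have hshiftflow : (fun n => μs (n+1)) = mfFlow p (μs 1) (fun n => πs (n+1)) := by
    funext n
    induction n with
    | zero => rfl
    | succ n ih =>
        show μs (n+2) = popStep p (mfFlow p (μs 1) (fun n => πs (n+1)) n) (πs (n+1))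
        have : mfFlow p (μs 1) (fun n => πs (n+1)) n = μs (n+1) := ih.symm
        rw [this, hflow]; rfl
  refine ⟨fun n x => hπ (n+1) x, hshiftflow, ?_⟩
  intro πs' hπs'
  set πsC : ℕ → X → A → ℝ := fun n => Nat.casesOn n (πs 0) πs' with hπsC
  have hπsCpol : IsPolicy πsC := by
    intro n x; cases n with
    | zero => exact hπ 0 x
    | succ k => exact hπs' k x
  have hμ00 : μs 0 = μ₀ := by rw [hflow]; rfl
  have hν1 : ∀ (σ : ℕ → X → A → ℝ), σ 0 = πs 0 → marginals p μ₀ σ μs 1 = μs 1 := by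
    intro σ hσ
    funext x
    show (∑ x' : X, μ₀ x' * ∑ a : A, σ 0 x' a * p x' a (μs 0) x) = μs 1 x
    rw [hσ, hμ00, hflow]
    rfl
  have key := hopt πsC hπsCpol
  rw [reward_decomp p r hγ hp hr hμ₀ hπsCpol hμs,
      reward_decomp p r hγ hp hr hμ₀ hπ hμs] at key
  rw [hν1 πsC rfl, hν1 πs rfl] at key
  have hcs : (fun k => πsC (k+1)) = πs' := rfl
  have hc0 : πsC 0 = πs 0 := rfl
  rw [hcs, hc0] at key
  have := le_of_add_le_add_left key
  exact le_of_mul_le_mul_left this hγ.1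

end Helpers

/-- Assume existence of an MFG-NE for every `μ₀ ∈ Δ_X` and uniqueness of the
equilibrium MF flow. For each `μ ∈ Δ_X` choose an MFG-NE `(π̂^μ, μ̂^μ)` consistent with `μ`, and
define the population-dependent policy `π̃(x,μ) := π̂^μ₀(x)` (time-0 stationary policy of the
chosen equilibrium starting from `μ`). Then for every `μ₀ ∈ Δ_X`, the MF flow induced by `π̃`
from `μ₀` coincides with the equilibrium flow: `𝛍^{μ₀,π̃}_n = μ̂^{μ₀}_n` for all `n`. -/
theorem masterPolicy_flow_eq_equilibrium_flow
    {X A : Type*} [Fintype X] [Nonempty X] [Fintype A] [Nonempty A]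
    (p : X → A → (X → ℝ) → X → ℝ) (r : X → A → (X → ℝ) → ℝ) (γ C : ℝ)
    (hp : ∀ x a μ, μ ∈ stdSimplex ℝ X → p x a μ ∈ stdSimplex ℝ X)
    (hr : ∀ x a μ, μ ∈ stdSimplex ℝ X → |r x a μ| ≤ C)
    (hγ : γ ∈ Set.Ioo (0 : ℝ) 1)
    (πhat : (X → ℝ) → ℕ → X → A → ℝ) (μhat : (X → ℝ) → ℕ → X → ℝ)
    (hchoice : ∀ μ ∈ stdSimplex ℝ X, IsMFGNash p r γ μ (πhat μ) (μhat μ))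
    (huniq : ∀ μ₀ ∈ stdSimplex ℝ X, ∀ (πs πs' : ℕ → X → A → ℝ) (μs μs' : ℕ → X → ℝ),
      IsMFGNash p r γ μ₀ πs μs → IsMFGNash p r γ μ₀ πs' μs' → μs = μs')
    (πt : X → (X → ℝ) → A → ℝ)
    (hπt : πt = fun x μ => πhat μ 0 x) :
    ∀ μ₀ ∈ stdSimplex ℝ X, ∀ n : ℕ, indFlow p πt μ₀ n = μhat μ₀ n := by
  intro μ₀ hμ₀
  obtain ⟨hπ₀, hflow₀, -⟩ := hchoice μ₀ hμ₀
  have hmemAll : ∀ n, μhat μ₀ n ∈ stdSimplex ℝ X := by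
    intro n; rw [hflow₀]; exact mfFlow_mem p hp hμ₀ hπ₀ n
  have main : ∀ n, indFlow p πt μ₀ n = μhat μ₀ n ∧
      μhat (μhat μ₀ n) = fun k => μhat μ₀ (n + k) := by
    intro n
    induction n with
    | zero =>
        have h0 : μhat μ₀ 0 = μ₀ := by rw [hflow₀]; rfl
        constructor
        · exact h0.symm
        · rw [h0]; funext k; rw [Nat.zero_add]
    | succ n ih =>
        obtain ⟨hind, hshift⟩ := ih
        have hmem : μhat μ₀ n ∈ stdSimplex ℝ X := hmemAll n
        obtain ⟨hπν, hflowν, -⟩ := hchoice (μhat μ₀ n) hmem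
        have hν1 : μhat (μhat μ₀ n) 1 = μhat μ₀ (n+1) := congrFun hshift 1
        have h1 : indFlow p πt μ₀ (n+1) = μhat μ₀ (n+1) := by
          show popStep p (indFlow p πt μ₀ n) (fun x => πt x (indFlow p πt μ₀ n)) = _
          rw [hind, hπt, ← hν1, hflowν]
          rfl
        refine ⟨h1, ?_⟩
        have htail := tail_nash p r hγ hp hr hmem (hchoice (μhat μ₀ n) hmem)
        rw [hν1] at htail
        have hmem' : μhat μ₀ (n+1) ∈ stdSimplex ℝ X := hmemAll (n+1)
        have huq := huniq _ hmem' _ _ _ _ htail (hchoice _ hmem')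
        rw [← huq]
        funext k
        have := congrFun hshift (k+1)
        rw [this, show n + (k+1) = n + 1 + k from by omega]
  intro n
  exact (main n).1
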